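/- arXiv:2504.02706 — 4 statements merged into one kernel-verified Lean document; each statement's English description precedes it below -/
import Mathlib

section
/- For any real β, ω, Hermitian H, and matrix A, the operator Fourier transform with Gaussian width σ satisfies the imaginary-time conjugation identity e^{βH} Â_H(ω) e^{-βH} = e^{βω + σ²β²} · Â_H(ω + 2σ²β). -/
open scoped Matrix.Norms.L2Operator

open Matrix Complex Real MeasureTheory


open scoped Matrix.Norms.L2Operator

open Matrix Complex Real MeasureTheory

/-- The Bohr-frequency component `A_ν = Σ_{E₂-E₁=ν} P_{E₂} A P_{E₁}` of a matrix `A`. -/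
noncomputable def bohrComponent {m : ℕ} (Evs : Finset ℝ) (P : ℝ → Matrix (Fin m) (Fin m) ℂ)
    (A : Matrix (Fin m) (Fin m) ℂ) (ν : ℝ) : Matrix (Fin m) (Fin m) ℂ :=
  ∑ p ∈ (Evs ×ˢ Evs).filter (fun p => p.2 - p.1 = ν), P p.2 * A * P p.1

/-- The set of Bohr frequencies `B(H) = Spec(H) - Spec(H)`. -/
noncomputable def bohrSet (Evs : Finset ℝ) : Finset ℝ :=
  (Evs ×ˢ Evs).image (fun p => p.2 - p.1)

/-- The Gaussian Fourier weight `f̂(ω) = (σ√(2π))^{-1/2} exp(-ω²/(4σ²))`. -/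
noncomputable def gaussWeightHat (σ ω : ℝ) : ℝ :=
  (Real.sqrt (σ * Real.sqrt (2 * π)))⁻¹ * Real.exp (-(ω ^ 2) / (4 * σ ^ 2))

/-- The operator Fourier transform `Â_H(ω) = Σ_{ν∈B(H)} A_ν f̂(ω-ν)`. -/
noncomputable def oft {m : ℕ} (Evs : Finset ℝ) (P : ℝ → Matrix (Fin m) (Fin m) ℂ)
    (σ : ℝ) (A : Matrix (Fin m) (Fin m) ℂ) (ω : ℝ) : Matrix (Fin m) (Fin m) ℂ :=
  ∑ ν ∈ bohrSet Evs, ((gaussWeightHat σ (ω - ν) : ℂ)) • bohrComponent Evs P A ν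

/-! Each spectral projection is an eigenvector of left and right multiplication by `H`, so
`e^{βH} P_{E₂} A P_{E₁} e^{-βH} = e^{β(E₂-E₁)} P_{E₂} A P_{E₁}` and conjugation multiplies the Bohr
component `A_ν` by `e^{βν}`. Completing the square in the Gaussian weight,
`f̂(ω-ν) e^{βν} = e^{βω+σ²β²} f̂(ω+2σ²β-ν)`, turns this factor into a shift of the frequency. -/

section SpectralDecomposition

variable {ι 𝕜 R : Type*} [CommSemiring 𝕜] [Semiring R] [Algebra 𝕜 R]
  {s : Finset ι} {c : ι → 𝕜} {P : ι → R} {H : R}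

theorem mul_projection_eq_smul (hH : H = ∑ j ∈ s, c j • P j) (hproj : ∀ i ∈ s, P i * P i = P i)
    (horth : ∀ i ∈ s, ∀ j ∈ s, i ≠ j → P i * P j = 0) {i : ι} (hi : i ∈ s) :
    H * P i = c i • P i := by
  rw [hH, Finset.sum_mul, Finset.sum_eq_single_of_mem i hi]
  · rw [smul_mul_assoc, hproj i hi]
  · intro j hj hji
    rw [smul_mul_assoc, horth j hj i hi hji, smul_zero]

theorem projection_mul_eq_smul (hH : H = ∑ j ∈ s, c j • P j) (hproj : ∀ i ∈ s, P i * P i = P i)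
    (horth : ∀ i ∈ s, ∀ j ∈ s, i ≠ j → P i * P j = 0) {i : ι} (hi : i ∈ s) :
    P i * H = c i • P i := by
  rw [hH, Finset.mul_sum, Finset.sum_eq_single_of_mem i hi]
  · rw [mul_smul_comm, hproj i hi]
  · intro j hj hji
    rw [mul_smul_comm, horth i hi j hj hji.symm, smul_zero]

end SpectralDecomposition

section Eigen

open scoped Nat

variable {𝕂 𝔸 : Type*} [RCLike 𝕂] [NormedRing 𝔸] [NormedAlgebra 𝕂 𝔸] [CompleteSpace 𝔸]
  {a q : 𝔸} {μ : 𝕂}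

theorem NormedSpace.exp_mul_of_mul_eq_smul (h : a * q = μ • q) :
    NormedSpace.exp a * q = NormedSpace.exp μ • q := by
  have hpow : ∀ n : ℕ, a ^ n * q = μ ^ n • q := fun n => by
    induction n with
    | zero => simp
    | succ n ih => rw [pow_succ', mul_assoc, ih, mul_smul_comm, h, smul_smul, pow_succ]
  have hterm : (fun n : ℕ => ((n !⁻¹ : 𝕂) • a ^ n) * q) = fun n => ((n !⁻¹ : 𝕂) * μ ^ n) • q := by
    ext n
    rw [smul_mul_assoc, hpow, smul_smul]
  have hsum := (NormedSpace.exp_series_hasSum_exp' (𝕂 := 𝕂) a).mul_right q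
  rw [hterm] at hsum
  exact hsum.unique ((NormedSpace.exp_series_hasSum_exp' (𝕂 := 𝕂) μ).smul_const q)

theorem NormedSpace.mul_exp_of_mul_eq_smul (h : q * a = μ • q) :
    q * NormedSpace.exp a = NormedSpace.exp μ • q := by
  have hpow : ∀ n : ℕ, q * a ^ n = μ ^ n • q := fun n => by
    induction n with
    | zero => simp
    | succ n ih => rw [pow_succ, ← mul_assoc, ih, smul_mul_assoc, h, smul_smul, pow_succ]
  have hterm : (fun n : ℕ => q * ((n !⁻¹ : 𝕂) • a ^ n)) = fun n => ((n !⁻¹ : 𝕂) * μ ^ n) • q := by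
    ext n
    rw [mul_smul_comm, hpow, smul_smul]
  have hsum := (NormedSpace.exp_series_hasSum_exp' (𝕂 := 𝕂) a).mul_left q
  rw [hterm] at hsum
  exact hsum.unique ((NormedSpace.exp_series_hasSum_exp' (𝕂 := 𝕂) μ).smul_const q)

end Eigen

theorem gaussWeightHat_mul_exp {σ : ℝ} (hσ : σ ≠ 0) (β ω ν : ℝ) :
    gaussWeightHat σ (ω - ν) * Real.exp (β * ν) =
      Real.exp (β * ω + σ ^ 2 * β ^ 2) * gaussWeightHat σ (ω + 2 * σ ^ 2 * β - ν) := by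
  unfold gaussWeightHat
  rw [mul_assoc, ← Real.exp_add, mul_left_comm, ← Real.exp_add]
  congr 2
  field_simp
  ring

theorem exp_smul_mul_bohrComponent_mul_exp_neg_smul {m : ℕ} {Evs : Finset ℝ}
    {P : ℝ → Matrix (Fin m) (Fin m) ℂ} {H : Matrix (Fin m) (Fin m) ℂ}
    (hH : H = ∑ E ∈ Evs, (E : ℂ) • P E) (hproj : ∀ E ∈ Evs, P E * P E = P E)
    (horth : ∀ E ∈ Evs, ∀ E' ∈ Evs, E ≠ E' → P E * P E' = 0)
    (A : Matrix (Fin m) (Fin m) ℂ) (β ν : ℝ) :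
    NormedSpace.exp ((β : ℂ) • H) * bohrComponent Evs P A ν *
        NormedSpace.exp ((-(β : ℂ)) • H) =
      (Real.exp (β * ν) : ℂ) • bohrComponent Evs P A ν := by
  unfold bohrComponent
  rw [Finset.mul_sum, Finset.sum_mul, Finset.smul_sum]
  refine Finset.sum_congr rfl fun p hp => ?_
  obtain ⟨⟨hp₁, hp₂⟩, hν⟩ := Finset.mem_filter.1 hp |>.imp_left Finset.mem_product.1
  have hleft : NormedSpace.exp ((β : ℂ) • H) * P p.2 =
      Complex.exp (β * p.2) • P p.2 := by
    rw [Complex.exp_eq_exp_ℂ]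
    refine NormedSpace.exp_mul_of_mul_eq_smul ?_
    rw [smul_mul_assoc, mul_projection_eq_smul hH hproj horth hp₂, smul_smul]
  have hright : P p.1 * NormedSpace.exp ((-(β : ℂ)) • H) =
      Complex.exp (-β * p.1) • P p.1 := by
    rw [Complex.exp_eq_exp_ℂ]
    refine NormedSpace.mul_exp_of_mul_eq_smul ?_
    rw [mul_smul_comm, projection_mul_eq_smul hH hproj horth hp₁, smul_smul]
  calc _ = (NormedSpace.exp ((β : ℂ) • H) * P p.2) * A *
        (P p.1 * NormedSpace.exp ((-(β : ℂ)) • H)) := by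
        simp only [mul_assoc]
    _ = Complex.exp (β * p.2 + -β * p.1) • (P p.2 * A * P p.1) := by
        rw [hleft, hright, smul_mul_assoc, smul_mul_assoc, mul_smul_comm, smul_smul,
          Complex.exp_add]
    _ = _ := by
        rw [← hν, Complex.ofReal_exp]
        push_cast
        ring_nf

theorem exp_conj_oft_general {m : ℕ} (Evs : Finset ℝ)
    (P : ℝ → Matrix (Fin m) (Fin m) ℂ) (H A : Matrix (Fin m) (Fin m) ℂ)
    (hH : H = ∑ E ∈ Evs, (E : ℂ) • P E)
    (hproj : ∀ E ∈ Evs, P E * P E = P E)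
    (horth : ∀ E ∈ Evs, ∀ E' ∈ Evs, E ≠ E' → P E * P E' = 0)
    (σ : ℝ) (hσ : 0 < σ) (β ω : ℝ) :
    NormedSpace.exp ((β : ℂ) • H) * oft Evs P σ A ω * NormedSpace.exp ((-(β : ℂ)) • H) =
      ((Real.exp (β * ω + σ ^ 2 * β ^ 2) : ℂ)) • oft Evs P σ A (ω + 2 * σ ^ 2 * β) := by
  unfold oft
  rw [Finset.mul_sum, Finset.sum_mul, Finset.smul_sum]
  refine Finset.sum_congr rfl fun ν _ => ?_
  rw [mul_smul_comm, smul_mul_assoc, exp_smul_mul_bohrComponent_mul_exp_neg_smul hH hproj horth,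
    smul_smul, smul_smul, ← Complex.ofReal_mul, ← Complex.ofReal_mul,
    gaussWeightHat_mul_exp hσ.ne']

/-- **Imaginary-time conjugation of the operator Fourier transform:**
`e^{βH} Â_H(ω) e^{-βH} = e^{βω + σ²β²} Â_H(ω + 2σ²β)`, where `Â_H` is the operator
Fourier transform with Gaussian width `σ` of `A` with respect to `H = Σ_E E P_E`. -/
theorem exp_conj_oft {m : ℕ} (Evs : Finset ℝ)
    (P : ℝ → Matrix (Fin m) (Fin m) ℂ) (H A : Matrix (Fin m) (Fin m) ℂ)
    (hH : H = ∑ E ∈ Evs, (E : ℂ) • P E)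
    (hsum : ∑ E ∈ Evs, P E = 1)
    (hproj : ∀ E ∈ Evs, P E * P E = P E)
    (hherm : ∀ E ∈ Evs, (P E)ᴴ = P E)
    (horth : ∀ E ∈ Evs, ∀ E' ∈ Evs, E ≠ E' → P E * P E' = 0)
    (σ : ℝ) (hσ : 0 < σ) (β ω : ℝ) :
    NormedSpace.exp ((β : ℂ) • H) * oft Evs P σ A ω * NormedSpace.exp ((-(β : ℂ)) • H) =
      ((Real.exp (β * ω + σ ^ 2 * β ^ 2) : ℂ)) • oft Evs P σ A (ω + 2 * σ ^ 2 * β) :=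
  exp_conj_oft_general Evs P H A hH hproj horth σ hσ β ω
end

section
/- Let H = Σ_{γ∈Γ} h_γ be a Hamiltonian with each ‖h_γ‖ ≤ 1 and interaction degree at most d, and let A be a single-site operator with ‖A‖ ≤ 1. Then for any real β with |β| < 1/(2d), the imaginary-time conjugation converges with bound ‖e^{βH} A e^{-βH}‖ ≤ 1/(1 - 2d|β|). -/
/-!
Expanding `e^{βH} A e^{-βH} = Σ_k (β^k / k!) ad_H^k A`, the term `ad_H^k A` is a sum of nested
commutators `[h_{γ_k}, …, [h_{γ_1}, A]…]`, and a commutator `[h_γ, X]` vanishes unless `supp h_γ`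
meets the support of `X`. Since after `j` steps the support is covered by `A`'s site and `j`
term supports, each of which meets at most `d` terms, there are at most `(j + 1) d` choices for
the next term; so `‖ad_H^k A‖ ≤ k! (2d)^k` and the series is dominated by `Σ_k (2d|β|)^k`.
-/

open scoped Matrix.Norms.L2Operator

open Matrix

/-- A matrix on the qubits indexed by `V` is supported on the set `S` if its entries
vanish unless the configurations agree off `S`, and only depend on the restriction to `S`
(i.e. `A = A_S ⊗ I_{S^c}`). -/
def SupportedOn {V : Type*} [DecidableEq V] (S : Finset V)
    (A : Matrix (V → Fin 2) (V → Fin 2) ℂ) : Prop :=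
  (∀ x y : V → Fin 2, (∃ v ∉ S, x v ≠ y v) → A x y = 0) ∧
  (∀ x y x' y' : V → Fin 2, (∀ v ∈ S, x v = x' v) → (∀ v ∈ S, y v = y' v) →
    (∀ v ∉ S, x v = y v) → (∀ v ∉ S, x' v = y' v) → A x y = A x' y')

open NormedSpace ContinuousLinearMap Nat

noncomputable section AdjointAction

variable (𝕂 𝔸 : Type*) [RCLike 𝕂] [NormedRing 𝔸] [NormedAlgebra 𝕂 𝔸]

/-- The adjoint action `[B, ·]`, as a bounded operator: Mathlib's `LieAlgebra.ad` lands in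
`Module.End`, which carries no norm and hence no exponential. -/
def ad : 𝔸 →L[𝕂] 𝔸 →L[𝕂] 𝔸 := mul 𝕂 𝔸 - (mul 𝕂 𝔸).flip

variable {𝕂 𝔸}

@[simp]
lemma ad_apply (B X : 𝔸) : ad 𝕂 𝔸 B X = B * X - X * B := rfl

lemma norm_ad_apply_le (B X : 𝔸) : ‖ad 𝕂 𝔸 B X‖ ≤ 2 * ‖B‖ * ‖X‖ :=
  calc ‖B * X - X * B‖ ≤ ‖B‖ * ‖X‖ + ‖X‖ * ‖B‖ :=
        (norm_sub_le _ _).trans (add_le_add (norm_mul_le _ _) (norm_mul_le _ _))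
    _ = 2 * ‖B‖ * ‖X‖ := by ring

variable (𝕂 𝔸)

def mulLeftRingHom : 𝔸 →+* (𝔸 →L[𝕂] 𝔸) where
  toFun := mul 𝕂 𝔸
  map_one' := by ext; simp
  map_mul' a b := by ext; simp [mul_assoc]
  map_zero' := map_zero _
  map_add' := map_add _

def mulRightRingHom : 𝔸ᵐᵒᵖ →+* (𝔸 →L[𝕂] 𝔸) where
  toFun a := (mul 𝕂 𝔸).flip a.unop
  map_one' := by ext; simp
  map_mul' a b := by ext; simp [mul_assoc]
  map_zero' := by simp
  map_add' a b := by simp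

variable {𝕂 𝔸} [CompleteSpace 𝔸]

lemma exp_mulLeft (B : 𝔸) : exp (mul 𝕂 𝔸 B) = mul 𝕂 𝔸 (exp B) :=
  (map_exp_of_mem_ball (𝕂 := 𝕂) (mulLeftRingHom 𝕂 𝔸) (mul 𝕂 𝔸).continuous B
    ((expSeries_radius_eq_top 𝕂 𝔸).symm ▸ edist_lt_top _ _)).symm

lemma exp_mulRight (B : 𝔸) : exp ((mul 𝕂 𝔸).flip B) = (mul 𝕂 𝔸).flip (exp B) := by
  have := map_exp_of_mem_ball (𝕂 := 𝕂) (mulRightRingHom 𝕂 𝔸)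
    ((mul 𝕂 𝔸).flip.continuous.comp MulOpposite.continuous_unop) (MulOpposite.op B)
    ((expSeries_radius_eq_top 𝕂 𝔸ᵐᵒᵖ).symm ▸ edist_lt_top _ _)
  rw [exp_op] at this
  exact this.symm

/-- Left and right multiplication by `B` commute, so `exp (ad B) = exp (L_B) * exp (-R_B)`. -/
lemma exp_ad_apply (B A : 𝔸) : exp (ad 𝕂 𝔸 B) A = exp B * A * exp (-B) := by
  have hcomm : Commute (mul 𝕂 𝔸 B) (-(mul 𝕂 𝔸).flip B) :=
    Commute.neg_right (by ext X; simp [mul_assoc])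
  rw [ad, _root_.sub_apply, sub_eq_add_neg, exp_add_of_commute_of_mem_ball (𝕂 := 𝕂) hcomm
    ((expSeries_radius_eq_top 𝕂 (𝔸 →L[𝕂] 𝔸)).symm ▸ edist_lt_top _ _)
    ((expSeries_radius_eq_top 𝕂 (𝔸 →L[𝕂] 𝔸)).symm ▸ edist_lt_top _ _), ← map_neg, exp_mulLeft,
    exp_mulRight]
  simp [mul_assoc]

lemma hasSum_ad_pow_apply (B A : 𝔸) :
    HasSum (fun k : ℕ => (k ! : 𝕂)⁻¹ • (ad 𝕂 𝔸 B ^ k) A) (exp B * A * exp (-B)) := by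
  rw [← exp_ad_apply (𝕂 := 𝕂)]
  exact (exp_series_hasSum_exp' (𝕂 := 𝕂) (ad 𝕂 𝔸 B)).mapL (apply 𝕂 𝔸 A)

lemma norm_exp_mul_mul_exp_neg_le {B A : 𝔸} {c : ℝ} (hc : c < 1)
    (hbound : ∀ k, ‖(ad 𝕂 𝔸 B ^ k) A‖ ≤ k ! * c ^ k) :
    ‖exp B * A * exp (-B)‖ ≤ (1 - c)⁻¹ := by
  have hc0 : 0 ≤ c := by simpa using (norm_nonneg _).trans (hbound 1)
  refine (hasSum_ad_pow_apply (𝕂 := 𝕂) B A).norm_le_of_bounded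
    (hasSum_geometric_of_lt_one hc0 hc) fun k => ?_
  rw [norm_smul, norm_inv, RCLike.norm_natCast, inv_mul_le_iff₀ (by positivity)]
  exact hbound k

end AdjointAction

section SupportedOn

variable {V : Type*} [DecidableEq V] {S T : Finset V}
  {A X Y : Matrix (V → Fin 2) (V → Fin 2) ℂ}

lemma SupportedOn.apply_eq_zero (hA : SupportedOn S A) {x y : V → Fin 2} {v : V} (hv : v ∉ S)
    (hxy : x v ≠ y v) : A x y = 0 :=
  hA.1 x y ⟨v, hv, hxy⟩

lemma SupportedOn.apply_add_add (hA : SupportedOn S A) {δ : V → Fin 2} (hδ : ∀ v ∈ S, δ v = 0)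
    (x y : V → Fin 2) : A (x + δ) (y + δ) = A x y := by
  by_cases hxy : ∃ v ∉ S, x v ≠ y v
  · obtain ⟨v, hv, hne⟩ := hxy
    rw [hA.apply_eq_zero hv hne, hA.apply_eq_zero hv (by simpa using hne)]
  · push Not at hxy
    exact hA.2 _ _ _ _ (fun v hv => by simp [hδ v hv]) (fun v hv => by simp [hδ v hv])
      (fun v hv => by simp [hxy v hv]) hxy

lemma supportedOn_iff :
    SupportedOn S A ↔ (∀ x y : V → Fin 2, (∃ v ∉ S, x v ≠ y v) → A x y = 0) ∧
      ∀ δ : V → Fin 2, (∀ v ∈ S, δ v = 0) → ∀ x y, A (x + δ) (y + δ) = A x y := by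
  refine ⟨fun hA => ⟨hA.1, fun δ hδ => hA.apply_add_add hδ⟩, fun ⟨h0, hadd⟩ => ⟨h0, ?_⟩⟩
  intro x y x' y' hx hy hxy hxy'
  have hx' : x' = x + (x' - x) := by abel
  have hy' : y' = y + (x' - x) := by
    funext v
    by_cases hv : v ∈ S
    · simp [← hx v hv, ← hy v hv]
    · simp [hxy v hv, hxy' v hv]
  rw [hx', hy', hadd _ (fun v hv => by simp [hx v hv])]

lemma SupportedOn.sub (hX : SupportedOn S X) (hY : SupportedOn S Y) : SupportedOn S (X - Y) :=
  supportedOn_iff.2 ⟨fun x y h => by simp [hX.1 x y h, hY.1 x y h],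
    fun δ hδ x y => by simp [hX.apply_add_add hδ, hY.apply_add_add hδ]⟩

lemma SupportedOn.mul [Fintype V] (hX : SupportedOn S X) (hY : SupportedOn T Y) :
    SupportedOn (S ∪ T) (X * Y) := by
  refine supportedOn_iff.2 ⟨?_, fun δ hδ x y => ?_⟩
  · rintro x y ⟨v, hv, hne⟩
    rw [Finset.mem_union, not_or] at hv
    rw [Matrix.mul_apply]
    refine Finset.sum_eq_zero fun z _ => ?_
    by_cases hz : x v = z v
    · rw [hY.apply_eq_zero hv.2 (hz ▸ hne), mul_zero]
    · rw [hX.apply_eq_zero hv.1 hz, zero_mul]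
  · simp only [Matrix.mul_apply]
    refine (Fintype.sum_equiv (Equiv.addRight δ) _ _ fun z => ?_).symm
    show X x z * Y z y = X (x + δ) (z + δ) * Y (z + δ) (y + δ)
    rw [hX.apply_add_add fun v hv => hδ v (Finset.mem_union_left T hv),
      hY.apply_add_add fun v hv => hδ v (Finset.mem_union_right S hv)]

/-- Reindexed by `z ↦ x + y - z`, the sums defining `(X * Y) x y` and `(Y * X) x y` agree
term by term. -/
lemma SupportedOn.commute [Fintype V] (hX : SupportedOn S X) (hY : SupportedOn T Y)
    (hST : Disjoint S T) : Commute X Y := by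
  ext x y
  simp only [Matrix.mul_apply]
  refine Fintype.sum_equiv (Equiv.subLeft (x + y)) _ _ fun z => ?_
  show X x z * Y z y = Y x (x + y - z) * X (x + y - z) y
  by_cases hxz : ∃ v ∉ S, x v ≠ z v
  · obtain ⟨v, hv, hne⟩ := hxz
    rw [hX.apply_eq_zero hv hne, hX.apply_eq_zero hv (x := x + y - z) (y := y)
      fun h => hne <| add_right_cancel ((sub_eq_iff_eq_add.1 h).trans (add_comm _ _)),
      zero_mul, mul_zero]
  by_cases hzy : ∃ v ∉ T, z v ≠ y v
  · obtain ⟨v, hv, hne⟩ := hzy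
    rw [hY.apply_eq_zero hv hne, hY.apply_eq_zero hv (x := x) (y := x + y - z)
      fun h => hne <| add_left_cancel (eq_sub_iff_add_eq.1 h),
      mul_zero, zero_mul]
  push Not at hxz hzy
  have hXz : X x z = X (x + y - z) y := by
    convert (hX.apply_add_add (δ := y - z) (fun v hv => ?_) x z).symm using 2
    · abel
    · abel
    · simp [hzy v (Finset.disjoint_left.1 hST hv)]
  have hYz : Y z y = Y x (x + y - z) := by
    convert (hY.apply_add_add (δ := x - z) (fun v hv => ?_) z y).symm using 2
    · abel
    · abel
    · simp [hxz v (Finset.disjoint_right.1 hST hv)]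
  rw [hXz, hYz, mul_comm]

lemma SupportedOn.smul (hA : SupportedOn S A) (c : ℂ) : SupportedOn S (c • A) :=
  supportedOn_iff.2 ⟨fun x y h => by simp [hA.1 x y h],
    fun δ hδ x y => by simp [hA.apply_add_add hδ]⟩

lemma SupportedOn.commutator [Fintype V] (hX : SupportedOn S X) (hY : SupportedOn T Y) :
    SupportedOn (S ∪ T) (X * Y - Y * X) :=
  (hX.mul hY).sub (Finset.union_comm T S ▸ hY.mul hX)

end SupportedOn

section Hamiltonian

variable {V Γ : Type*} [DecidableEq V] [Fintype Γ]

/-- `(overlapping supp (supp γ)).card` is the interaction degree of the term `γ`. -/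
def overlapping (supp : Γ → Finset V) (S : Finset V) : Finset Γ :=
  Finset.univ.filter fun γ => (S ∩ supp γ).Nonempty

lemma card_overlapping_union_le (supp : Γ → Finset V) (S T : Finset V) :
    (overlapping supp (S ∪ T)).card ≤ (overlapping supp S).card + (overlapping supp T).card := by
  classical
  refine (Finset.card_le_card fun γ hγ => ?_).trans (Finset.card_union_le _ _)
  simpa [overlapping, Finset.union_inter_distrib_right] using hγ

lemma mem_overlapping_singleton {supp : Γ → Finset V} {i : V} {γ : Γ} :
    γ ∈ overlapping supp {i} ↔ i ∈ supp γ := by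
  simp [overlapping, Finset.Nonempty]

lemma card_overlapping_singleton_le {supp : Γ → Finset V} {d : ℕ}
    (hdeg : ∀ γ, (overlapping supp (supp γ)).card ≤ d) (i : V) :
    (overlapping supp {i}).card ≤ d := by
  by_cases hi : ∃ γ, i ∈ supp γ
  · obtain ⟨γ, hγ⟩ := hi
    refine (Finset.card_le_card fun γ' hγ' => ?_).trans (hdeg γ)
    simp only [overlapping, Finset.mem_filter, Finset.mem_univ, true_and]
    exact ⟨i, Finset.mem_inter.2 ⟨hγ, mem_overlapping_singleton.1 hγ'⟩⟩
  · push Not at hi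
    rw [Finset.card_eq_zero.2 (Finset.eq_empty_of_forall_notMem
      fun γ hγ => hi γ (mem_overlapping_singleton.1 hγ))]
    exact Nat.zero_le d

variable {supp : Γ → Finset V} {h : Γ → Matrix (V → Fin 2) (V → Fin 2) ℂ}

lemma ad_sum_apply_eq_sum_overlapping [Fintype V] (hsupp : ∀ γ, SupportedOn (supp γ) (h γ))
    {S : Finset V} {X : Matrix (V → Fin 2) (V → Fin 2) ℂ} (hX : SupportedOn S X) :
    ad ℂ _ (∑ γ, h γ) X = ∑ γ ∈ overlapping supp S, ad ℂ _ (h γ) X := by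
  rw [map_sum, _root_.sum_apply, overlapping, Finset.sum_filter_of_ne]
  intro γ _ hne
  by_contra hdisj
  rw [Finset.not_nonempty_iff_eq_empty, ← Finset.disjoint_iff_inter_eq_empty] at hdisj
  exact hne (by rw [ad_apply, ((hsupp γ).commute hX hdisj.symm).eq, sub_self])

/-- The support of `X` meets at most `m d` terms; commuting with one of them enlarges the support
by one term support, hence raises `m` by one, which produces the rising factorial. -/
theorem norm_ad_sum_pow_apply_le [Fintype V] (hsupp : ∀ γ, SupportedOn (supp γ) (h γ))
    {b : ℝ} (hb : 0 ≤ b) (hnorm : ∀ γ, ‖h γ‖ ≤ b)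
    {d : ℕ} (hdeg : ∀ γ, (overlapping supp (supp γ)).card ≤ d)
    (k : ℕ) {m : ℕ} {S : Finset V} {X : Matrix (V → Fin 2) (V → Fin 2) ℂ}
    (hX : SupportedOn S X) (hS : (overlapping supp S).card ≤ m * d) :
    ‖(ad ℂ _ (∑ γ, h γ) ^ k) X‖ ≤ m.ascFactorial k * (2 * b * d) ^ k * ‖X‖ := by
  induction k generalizing m S X with
  | zero => simp
  | succ k ih =>
    have hterm : ∀ γ ∈ overlapping supp S, ‖(ad ℂ _ (∑ γ, h γ) ^ k) (ad ℂ _ (h γ) X)‖ ≤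
        (m + 1).ascFactorial k * (2 * b * d) ^ k * (2 * b * ‖X‖) := by
      intro γ _
      have hcard : (overlapping supp (supp γ ∪ S)).card ≤ (m + 1) * d :=
        (card_overlapping_union_le supp _ _).trans
          ((Nat.add_le_add (hdeg γ) hS).trans_eq (by ring))
      refine (ih ((hsupp γ).commutator hX) hcard).trans ?_
      gcongr
      exact (norm_ad_apply_le (𝕂 := ℂ) _ _).trans (by gcongr; exact hnorm γ)
    calc ‖(ad ℂ _ (∑ γ, h γ) ^ (k + 1)) X‖
        = ‖∑ γ ∈ overlapping supp S, (ad ℂ _ (∑ γ, h γ) ^ k) (ad ℂ _ (h γ) X)‖ := by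
          rw [pow_succ, mul_apply_eq_comp, ad_sum_apply_eq_sum_overlapping hsupp hX, map_sum]
      _ ≤ (m * d : ℕ) * ((m + 1).ascFactorial k * (2 * b * d) ^ k * (2 * b * ‖X‖)) := by
          refine (norm_sum_le_of_le _ hterm).trans ?_
          rw [Finset.sum_const, nsmul_eq_mul]
          gcongr
      _ = m.ascFactorial (k + 1) * (2 * b * d) ^ (k + 1) * ‖X‖ := by
          rw [Nat.ascFactorial_succ, ← Nat.succ_ascFactorial]
          push_cast
          ring

end Hamiltonian

/-- **Convergence of imaginary-time conjugation at high temperature:**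
for a Hamiltonian `H = Σ_γ h_γ` with terms of norm at most `1` and interaction degree at
most `d`, a single-site operator `A` with `‖A‖ ≤ 1`, and `|β| < 1/(2d)`,
`‖e^{βH} A e^{-βH}‖ ≤ 1/(1 - 2d|β|)`. -/
theorem norm_exp_conj_le_of_small_beta
    {V Γ : Type} [Fintype V] [DecidableEq V] [Fintype Γ]
    (supp : Γ → Finset V) (h : Γ → Matrix (V → Fin 2) (V → Fin 2) ℂ)
    (d : ℕ)
    (hsupp : ∀ γ, SupportedOn (supp γ) (h γ))
    (hnorm : ∀ γ, ‖h γ‖ ≤ 1)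
    (hdeg : ∀ γ, (Finset.univ.filter (fun γ' => (supp γ ∩ supp γ').Nonempty)).card ≤ d)
    (i : V) (A : Matrix (V → Fin 2) (V → Fin 2) ℂ)
    (hA : SupportedOn {i} A) (hAnorm : ‖A‖ ≤ 1)
    (β : ℝ) (hβ : |β| < 1 / (2 * d)) :
    ‖NormedSpace.exp ((β : ℂ) • ∑ γ, h γ) * A *
        NormedSpace.exp ((-(β : ℂ)) • ∑ γ, h γ)‖ ≤ 1 / (1 - 2 * d * |β|) := by
  have hd : (0 : ℝ) < 2 * d := by
    refine lt_of_le_of_ne (by positivity) fun h0 => ?_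
    rw [← h0, div_zero] at hβ
    exact (abs_nonneg β).not_gt hβ
  have hr : 2 * d * |β| < 1 := by rwa [lt_div_iff₀ hd, mul_comm] at hβ
  have hnorm_smul : ∀ γ, ‖(β : ℂ) • h γ‖ ≤ |β| := fun γ => by
    rw [norm_smul, Complex.norm_real, Real.norm_eq_abs]
    exact mul_le_of_le_one_right (abs_nonneg β) (hnorm γ)
  rw [one_div, neg_smul, Finset.smul_sum]
  refine norm_exp_mul_mul_exp_neg_le (𝕂 := ℂ) hr fun k => ?_
  refine (norm_ad_sum_pow_apply_le (fun γ => (hsupp γ).smul _) (abs_nonneg β) hnorm_smul hdeg k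
    (m := 1) hA ((card_overlapping_singleton_le hdeg i).trans_eq (one_mul d).symm)).trans ?_
  rw [Nat.one_ascFactorial]
  calc (k ! : ℝ) * (2 * |β| * d) ^ k * ‖A‖ ≤ k ! * (2 * |β| * d) ^ k * 1 := by gcongr
    _ = k ! * (2 * d * |β|) ^ k := by ring
end

section
/- For any matrix A and Hermitian matrices H₁, H₂ with double Bohr decomposition (A_{ν₁})_{ν₂}, it holds that e^{H₂}e^{-H₁} A e^{H₁} e^{-H₂} − e^{-H₂}e^{H₁} A e^{-H₁} e^{H₂} = Σ_{ν₁∈B₁, ν₂∈B₂} (A_{ν₁})_{ν₂} · 2 sinh(ν₂ − ν₁). -/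
/-!
Since the spectral projections are orthogonal idempotents summing to `1`, the exponential of
`∑ f(E) • P_E` is `∑ exp(f(E)) • P_E`. Hence conjugation `X ↦ e^{tH} X e^{-tH}` multiplies the
Bohr component `X_ν` by `e^{tν}`. Conjugating first by `e^{∓H₁}` and then by `e^{±H₂}` multiplies
`(A_{ν₁})_{ν₂}` by `e^{±(ν₂ - ν₁)}`, and the difference of the two is `2 sinh (ν₂ - ν₁)`.
-/

open Matrix

section SpectralCalculus

variable {ι 𝔸 : Type*} [Ring 𝔸] [Algebra ℂ 𝔸] {s : Finset ι} {P : ι → 𝔸}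

theorem sum_smul_pow_of_orthogonal_idempotents (hsum : ∑ i ∈ s, P i = 1)
    (hidem : ∀ i ∈ s, P i * P i = P i) (horth : ∀ i ∈ s, ∀ j ∈ s, i ≠ j → P i * P j = 0)
    (f : ι → ℂ) (n : ℕ) :
    (∑ i ∈ s, f i • P i) ^ n = ∑ i ∈ s, f i ^ n • P i := by
  induction n with
  | zero => simpa using hsum.symm
  | succ n ih =>
    rw [pow_succ, ih, Finset.sum_mul_sum]
    refine Finset.sum_congr rfl fun i hi => ?_
    rw [Finset.sum_eq_single i (fun j hj hji => ?_) (absurd hi)]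
    · rw [smul_mul_smul_comm, hidem i hi, pow_succ]
    · rw [smul_mul_smul_comm, horth i hi j hj hji.symm, smul_zero]

theorem exp_sum_smul_of_orthogonal_idempotents [TopologicalSpace 𝔸] [IsTopologicalRing 𝔸]
    [ContinuousSMul ℂ 𝔸] [T2Space 𝔸] (hsum : ∑ i ∈ s, P i = 1)
    (hidem : ∀ i ∈ s, P i * P i = P i) (horth : ∀ i ∈ s, ∀ j ∈ s, i ≠ j → P i * P j = 0)
    (f : ι → ℂ) :
    NormedSpace.exp (∑ i ∈ s, f i • P i) = ∑ i ∈ s, Complex.exp (f i) • P i := by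
  have hseries : HasSum (fun n : ℕ => (n.factorial⁻¹ : ℂ) • (∑ i ∈ s, f i • P i) ^ n)
      (∑ i ∈ s, Complex.exp (f i) • P i) := by
    simp_rw [sum_smul_pow_of_orthogonal_idempotents hsum hidem horth, Finset.smul_sum, smul_smul]
    refine hasSum_sum fun i _ => HasSum.smul_const ?_ (P i)
    rw [Complex.exp_eq_exp_ℂ]
    exact NormedSpace.exp_series_hasSum_exp' (𝕂 := ℂ) (f i)
  rw [NormedSpace.exp_eq_tsum ℂ]
  exact hseries.tsum_eq

theorem sum_smul_mul_mul_sum_smul (A : 𝔸) (a b : ι → ℂ) :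
    (∑ i ∈ s, a i • P i) * A * (∑ j ∈ s, b j • P j)
      = ∑ p ∈ s ×ˢ s, (a p.2 * b p.1) • (P p.2 * A * P p.1) := by
  rw [Finset.sum_product]
  simp only [Finset.sum_mul, Finset.mul_sum, smul_mul_assoc, mul_smul_comm, Finset.smul_sum,
    smul_smul, mul_comm (b _) (a _)]

end SpectralCalculus

section Bohr

variable {m : ℕ} {S : Finset ℝ} {P : ℝ → Matrix (Fin m) (Fin m) ℂ}

theorem sum_smul_bohrComponent (A : Matrix (Fin m) (Fin m) ℂ) (c : ℝ → ℂ) :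
    ∑ ν ∈ bohrSet S, c ν • bohrComponent S P A ν
      = ∑ p ∈ S ×ˢ S, c (p.2 - p.1) • (P p.2 * A * P p.1) := by
  simp only [bohrSet, bohrComponent, Finset.smul_sum]
  rw [← Finset.sum_fiberwise_of_maps_to (g := fun p : ℝ × ℝ => p.2 - p.1)
    (fun p hp => Finset.mem_image_of_mem _ hp)]
  refine Finset.sum_congr rfl fun ν _ => Finset.sum_congr rfl fun p hp => ?_
  rw [(Finset.mem_filter.mp hp).2]

theorem exp_smul_mul_mul_exp_neg_smul {H : Matrix (Fin m) (Fin m) ℂ}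
    (hH : H = ∑ E ∈ S, (E : ℂ) • P E) (hsum : ∑ E ∈ S, P E = 1)
    (hidem : ∀ E ∈ S, P E * P E = P E) (horth : ∀ E ∈ S, ∀ E' ∈ S, E ≠ E' → P E * P E' = 0)
    (A : Matrix (Fin m) (Fin m) ℂ) (t : ℂ) :
    NormedSpace.exp (t • H) * A * NormedSpace.exp (-(t • H))
      = ∑ ν ∈ bohrSet S, Complex.exp (t * ν) • bohrComponent S P A ν := by
  have htH : t • H = ∑ E ∈ S, (t * E) • P E := by
    simp only [hH, Finset.smul_sum, smul_smul]
  have hneg : -(t • H) = ∑ E ∈ S, (-(t * E)) • P E := by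
    simp only [htH, neg_smul, Finset.sum_neg_distrib]
  rw [hneg, htH, exp_sum_smul_of_orthogonal_idempotents hsum hidem horth,
    exp_sum_smul_of_orthogonal_idempotents hsum hidem horth, sum_smul_mul_mul_sum_smul,
    sum_smul_bohrComponent]
  refine Finset.sum_congr rfl fun p _ => ?_
  rw [← Complex.exp_add, Complex.ofReal_sub, mul_sub, sub_eq_add_neg]

end Bohr

theorem Complex.exp_neg_mul_exp_sub_exp_mul_exp_neg (x y : ℂ) :
    Complex.exp (-x) * Complex.exp y - Complex.exp x * Complex.exp (-y)
      = 2 * Complex.sinh (y - x) := by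
  rw [Complex.two_sinh, ← Complex.exp_add, ← Complex.exp_add]
  congr 2 <;> ring

theorem double_bohr_sinh_general {m : ℕ}
    (Evs₁ Evs₂ : Finset ℝ) (P₁ P₂ : ℝ → Matrix (Fin m) (Fin m) ℂ)
    (H₁ H₂ A : Matrix (Fin m) (Fin m) ℂ)
    (hH₁ : H₁ = ∑ E ∈ Evs₁, (E : ℂ) • P₁ E)
    (hH₂ : H₂ = ∑ E ∈ Evs₂, (E : ℂ) • P₂ E)
    (hsum₁ : ∑ E ∈ Evs₁, P₁ E = 1) (hsum₂ : ∑ E ∈ Evs₂, P₂ E = 1)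
    (hproj₁ : ∀ E ∈ Evs₁, P₁ E * P₁ E = P₁ E) (hproj₂ : ∀ E ∈ Evs₂, P₂ E * P₂ E = P₂ E)
    (horth₁ : ∀ E ∈ Evs₁, ∀ E' ∈ Evs₁, E ≠ E' → P₁ E * P₁ E' = 0)
    (horth₂ : ∀ E ∈ Evs₂, ∀ E' ∈ Evs₂, E ≠ E' → P₂ E * P₂ E' = 0) :
    NormedSpace.exp H₂ * NormedSpace.exp (-H₁) * A *
        NormedSpace.exp H₁ * NormedSpace.exp (-H₂) -
      NormedSpace.exp (-H₂) * NormedSpace.exp H₁ * A *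
        NormedSpace.exp (-H₁) * NormedSpace.exp H₂ =
      ∑ ν₁ ∈ bohrSet Evs₁, ∑ ν₂ ∈ bohrSet Evs₂,
        ((2 * Real.sinh (ν₂ - ν₁) : ℝ) : ℂ) •
          bohrComponent Evs₂ P₂ (bohrComponent Evs₁ P₁ A ν₁) ν₂ := by
  have backward₁ : NormedSpace.exp (-H₁) * A * NormedSpace.exp H₁
      = ∑ ν ∈ bohrSet Evs₁, Complex.exp (-ν) • bohrComponent Evs₁ P₁ A ν := by
    simpa using exp_smul_mul_mul_exp_neg_smul hH₁ hsum₁ hproj₁ horth₁ A (-1)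
  have forward₁ : NormedSpace.exp H₁ * A * NormedSpace.exp (-H₁)
      = ∑ ν ∈ bohrSet Evs₁, Complex.exp ν • bohrComponent Evs₁ P₁ A ν := by
    simpa using exp_smul_mul_mul_exp_neg_smul hH₁ hsum₁ hproj₁ horth₁ A 1
  have backward₂ (X : Matrix (Fin m) (Fin m) ℂ) : NormedSpace.exp (-H₂) * X * NormedSpace.exp H₂
      = ∑ ν ∈ bohrSet Evs₂, Complex.exp (-ν) • bohrComponent Evs₂ P₂ X ν := by
    simpa using exp_smul_mul_mul_exp_neg_smul hH₂ hsum₂ hproj₂ horth₂ X (-1)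
  have forward₂ (X : Matrix (Fin m) (Fin m) ℂ) : NormedSpace.exp H₂ * X * NormedSpace.exp (-H₂)
      = ∑ ν ∈ bohrSet Evs₂, Complex.exp ν • bohrComponent Evs₂ P₂ X ν := by
    simpa using exp_smul_mul_mul_exp_neg_smul hH₂ hsum₂ hproj₂ horth₂ X 1
  calc _ = NormedSpace.exp H₂ * (NormedSpace.exp (-H₁) * A * NormedSpace.exp H₁) *
          NormedSpace.exp (-H₂) -
        NormedSpace.exp (-H₂) * (NormedSpace.exp H₁ * A * NormedSpace.exp (-H₁)) *
          NormedSpace.exp H₂ := by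
        simp only [mul_assoc]
    _ = ∑ ν₁ ∈ bohrSet Evs₁, ∑ ν₂ ∈ bohrSet Evs₂,
          (Complex.exp (-ν₁) * Complex.exp ν₂ - Complex.exp ν₁ * Complex.exp (-ν₂)) •
            bohrComponent Evs₂ P₂ (bohrComponent Evs₁ P₁ A ν₁) ν₂ := by
        rw [backward₁, forward₁]
        simp only [Finset.mul_sum, Finset.sum_mul, mul_smul_comm, smul_mul_assoc, forward₂,
          backward₂, Finset.smul_sum, smul_smul, sub_smul, Finset.sum_sub_distrib]
    _ = _ := by
        push_cast
        simp only [Complex.exp_neg_mul_exp_sub_exp_mul_exp_neg]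

/-- **Double Bohr frequency decomposition (sinh form):** for Hermitian `H₁ = Σ E P¹_E`,
`H₂ = Σ E P²_E` and any matrix `A`,
`e^{H₂}e^{-H₁} A e^{H₁}e^{-H₂} − e^{-H₂}e^{H₁} A e^{-H₁}e^{H₂}
  = Σ_{ν₁∈B₁,ν₂∈B₂} 2 sinh(ν₂−ν₁) (A_{ν₁})_{ν₂}`. -/
theorem double_bohr_sinh {m : ℕ}
    (Evs₁ Evs₂ : Finset ℝ) (P₁ P₂ : ℝ → Matrix (Fin m) (Fin m) ℂ)
    (H₁ H₂ A : Matrix (Fin m) (Fin m) ℂ)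
    (hH₁ : H₁ = ∑ E ∈ Evs₁, (E : ℂ) • P₁ E)
    (hH₂ : H₂ = ∑ E ∈ Evs₂, (E : ℂ) • P₂ E)
    (hsum₁ : ∑ E ∈ Evs₁, P₁ E = 1) (hsum₂ : ∑ E ∈ Evs₂, P₂ E = 1)
    (hproj₁ : ∀ E ∈ Evs₁, P₁ E * P₁ E = P₁ E) (hproj₂ : ∀ E ∈ Evs₂, P₂ E * P₂ E = P₂ E)
    (hherm₁ : ∀ E ∈ Evs₁, (P₁ E)ᴴ = P₁ E) (hherm₂ : ∀ E ∈ Evs₂, (P₂ E)ᴴ = P₂ E)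
    (horth₁ : ∀ E ∈ Evs₁, ∀ E' ∈ Evs₁, E ≠ E' → P₁ E * P₁ E' = 0)
    (horth₂ : ∀ E ∈ Evs₂, ∀ E' ∈ Evs₂, E ≠ E' → P₂ E * P₂ E' = 0) :
    NormedSpace.exp H₂ * NormedSpace.exp (-H₁) * A *
        NormedSpace.exp H₁ * NormedSpace.exp (-H₂) -
      NormedSpace.exp (-H₂) * NormedSpace.exp H₁ * A *
        NormedSpace.exp (-H₁) * NormedSpace.exp H₂ =
      ∑ ν₁ ∈ bohrSet Evs₁, ∑ ν₂ ∈ bohrSet Evs₂,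
        ((2 * Real.sinh (ν₂ - ν₁) : ℝ) : ℂ) •
          bohrComponent Evs₂ P₂ (bohrComponent Evs₁ P₁ A ν₁) ν₂ :=
  double_bohr_sinh_general Evs₁ Evs₂ P₁ P₂ H₁ H₂ A hH₁ hH₂ hsum₁ hsum₂ hproj₁ hproj₂ horth₁ horth₂
end

section
/- Let ρ be a positive definite density matrix on a bipartite system Λ = B ∪ B^c with |B| qubits in region B. Then Tr((Tr_B(ρ^{1/2}))²) ≥ 2^{-3|B|}. -/
open scoped ComplexOrder

open Matrix

/-- The partial trace over the first (region-`B`) tensor factor of a bipartite matrix. -/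
noncomputable def partialTraceB {α γ : Type*} [Fintype α]
    (M : Matrix (α × γ) (α × γ) ℂ) : Matrix γ γ ℂ :=
  Matrix.of fun y y' => ∑ x : α, M (x, y) (x, y')

/-- The positive square root of a positive semidefinite matrix (as in the older Mathlib's
`Matrix.PosSemidef.sqrt`, which has since been removed). -/
noncomputable def Matrix.PosSemidef.sqrt {n : Type*} [Fintype n] [DecidableEq n]
    {A : Matrix n n ℂ} (hA : A.PosSemidef) : Matrix n n ℂ :=
  hA.1.eigenvectorUnitary.1 * diagonal ((↑) ∘ (√·) ∘ hA.1.eigenvalues) *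
  (star hA.1.eigenvectorUnitary : Matrix n n ℂ)


/-! Write `σ = ρ^{1/2}` in blocks `σ_{xx'}` indexed by the basis of `B`, with `d = 2^{|B|}` blocks
per row. Then `Tr σ² = ∑_{x,x'} ‖σ_{xx'}‖²` (Frobenius norm), while
`Tr (Tr_B σ)² = ∑_{x,x'} Tr (σ_{xx} σ_{x'x'}) ≥ ∑_x ‖σ_{xx}‖²`, the cross terms being traces of
products of positive matrices. Factoring `σ = Bᴴ B` and letting `B_x` be the columns of `B` in
block `x` gives `‖σ_{xx'}‖² = ⟪B_x B_xᴴ, B_{x'} B_{x'}ᴴ⟫ ≤ ‖σ_{xx}‖ ‖σ_{x'x'}‖` by Cauchy–Schwarz for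
the Frobenius inner product, hence
`1 = Tr σ² ≤ (∑_x ‖σ_{xx}‖)² ≤ d ∑_x ‖σ_{xx}‖² ≤ d Tr (Tr_B σ)²`, which is even the bound `1/d`. -/

namespace Matrix

section Sqrt

variable {n : Type*} [Fintype n] [DecidableEq n] {A : Matrix n n ℂ} (hA : A.PosSemidef)

lemma PosSemidef.sqrt_eq_conjStarAlgAut :
    hA.sqrt = Unitary.conjStarAlgAut ℂ _ hA.1.eigenvectorUnitary
      (diagonal ((↑) ∘ (√·) ∘ hA.1.eigenvalues)) := by
  rw [Unitary.conjStarAlgAut_apply]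
  rfl

lemma PosSemidef.posSemidef_sqrt : hA.sqrt.PosSemidef := by
  rw [hA.sqrt_eq_conjStarAlgAut, Unitary.conjStarAlgAut_apply, star_eq_conjTranspose]
  refine PosSemidef.mul_mul_conjTranspose_same (posSemidef_diagonal_iff.mpr fun i => ?_) _
  simp [Complex.zero_le_real, Real.sqrt_nonneg]

lemma PosSemidef.sqrt_mul_self : hA.sqrt * hA.sqrt = A := by
  conv_rhs => rw [hA.1.spectral_theorem]
  rw [hA.sqrt_eq_conjStarAlgAut, ← map_mul, diagonal_mul_diagonal]
  congr 2
  funext i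
  simp [← Complex.ofReal_mul, Real.mul_self_sqrt (hA.eigenvalues_nonneg i)]

end Sqrt

section RCLike

open RCLike
open scoped MatrixOrder

variable {𝕜 : Type*} [RCLike 𝕜]

lemma re_trace_mul_conjTranspose_le {n : Type*} [Fintype n] [DecidableEq n]
    (X Y : Matrix n n 𝕜) :
    re (X * Yᴴ).trace ≤ √(re (X * Xᴴ).trace) * √(re (Y * Yᴴ).trace) := by
  let := toMatrixSeminormedAddCommGroup (1 : Matrix n n 𝕜) .one
  let := toMatrixInnerProductSpace (1 : Matrix n n 𝕜) .one
  have h : re (X * 1 * Yᴴ).trace ≤ √(re (Y * 1 * Yᴴ).trace) * √(re (X * 1 * Xᴴ).trace) :=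
    re_inner_le_norm (𝕜 := 𝕜) Y X
  rw [mul_comm (√_)]
  simpa only [Matrix.mul_one] using h

lemma PosSemidef.re_trace_mul_nonneg {n : Type*} [Fintype n] {A B : Matrix n n 𝕜}
    (hA : A.PosSemidef) (hB : B.PosSemidef) : 0 ≤ re (A * B).trace := by
  classical
  obtain ⟨C, rfl⟩ := CStarAlgebra.nonneg_iff_eq_star_mul_self.mp hA.nonneg
  rw [star_eq_conjTranspose, Matrix.mul_assoc, trace_mul_comm]
  exact (RCLike.nonneg_iff.mp (hB.mul_mul_conjTranspose_same C).trace_nonneg).1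

lemma trace_conjTranspose_mul_mul_conjTranspose_mul {m n p : Type*} [Fintype m] [Fintype n]
    [Fintype p] (X : Matrix m n 𝕜) (Y : Matrix m p 𝕜) :
    (Xᴴ * Y * (Yᴴ * X)).trace = (Y * Yᴴ * (X * Xᴴ)ᴴ).trace := by
  rw [conjTranspose_mul, conjTranspose_conjTranspose, Matrix.mul_assoc, trace_mul_comm]
  simp only [Matrix.mul_assoc]

lemma re_trace_conjTranspose_mul_mul_le {m n p : Type*} [Fintype m] [Fintype n] [Fintype p]
    (X : Matrix m n 𝕜) (Y : Matrix m p 𝕜) :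
    re (Xᴴ * Y * (Yᴴ * X)).trace ≤
      √(re (Xᴴ * X * (Xᴴ * X)).trace) * √(re (Yᴴ * Y * (Yᴴ * Y)).trace) := by
  classical
  rw [trace_conjTranspose_mul_mul_conjTranspose_mul X Y,
    trace_conjTranspose_mul_mul_conjTranspose_mul X X,
    trace_conjTranspose_mul_mul_conjTranspose_mul Y Y, mul_comm]
  exact re_trace_mul_conjTranspose_le _ _

lemma PosSemidef.re_trace_submatrix_mul_submatrix_le {ι μ ν : Type*} [Fintype ι] [Fintype μ]
    [Fintype ν] {S : Matrix ι ι 𝕜} (hS : S.PosSemidef) (e : μ → ι) (f : ν → ι) :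
    re (S.submatrix e f * S.submatrix f e).trace ≤
      √(re (S.submatrix e e * S.submatrix e e).trace) *
        √(re (S.submatrix f f * S.submatrix f f).trace) := by
  classical
  obtain ⟨B, rfl⟩ := CStarAlgebra.nonneg_iff_eq_star_mul_self.mp hS.nonneg
  simp only [submatrix_mul _ _ _ id _ Function.bijective_id, star_eq_conjTranspose,
    ← conjTranspose_submatrix]
  exact re_trace_conjTranspose_mul_mul_le _ _

lemma PosSemidef.sum_re_trace_mul_self_le {ι n : Type*} [Fintype ι] [Fintype n]
    {P : ι → Matrix n n 𝕜} (hP : ∀ i, (P i).PosSemidef) :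
    ∑ i, re (P i * P i).trace ≤ re ((∑ i, P i) * ∑ i, P i).trace := by
  rw [Finset.sum_mul, trace_sum, map_sum]
  refine Finset.sum_le_sum fun i _ => ?_
  rw [Finset.mul_sum, trace_sum, map_sum]
  exact Finset.single_le_sum (f := fun j => re (P i * P j).trace)
    (fun j _ => (hP i).re_trace_mul_nonneg (hP j)) (Finset.mem_univ i)

end RCLike

lemma trace_mul_eq_sum_trace_submatrix_mul {R α β γ δ : Type*} [NonUnitalNonAssocSemiring R]
    [Fintype α] [Fintype β] [Fintype γ] [Fintype δ]
    (M : Matrix (α × γ) (β × δ) R) (N : Matrix (β × δ) (α × γ) R) :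
    (M * N).trace = ∑ x, ∑ x', (M.submatrix (Prod.mk x) (Prod.mk x') *
      N.submatrix (Prod.mk x') (Prod.mk x)).trace := by
  simp only [trace, diag, mul_apply, submatrix_apply, Fintype.sum_prod_type]
  exact Finset.sum_congr rfl fun x _ => Finset.sum_comm

end Matrix

lemma partialTraceB_eq_sum_submatrix {α γ : Type*} [Fintype α] (M : Matrix (α × γ) (α × γ) ℂ) :
    partialTraceB M = ∑ x, M.submatrix (Prod.mk x) (Prod.mk x) := by
  ext y y'
  simp [partialTraceB, Matrix.sum_apply]

lemma Matrix.PosSemidef.re_trace_mul_self_le_card_mul_partialTraceB {α γ : Type*} [Fintype α]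
    [Fintype γ] {σ : Matrix (α × γ) (α × γ) ℂ} (hσ : σ.PosSemidef) :
    (σ * σ).trace.re ≤ Fintype.card α * (partialTraceB σ * partialTraceB σ).trace.re := by
  set block : α → α → Matrix γ γ ℂ := fun x x' => σ.submatrix (Prod.mk x) (Prod.mk x')
  set s : α → ℝ := fun x => √(block x x * block x x).trace.re
  have hblock : ∀ x, (block x x).PosSemidef := fun x => hσ.submatrix _
  calc (σ * σ).trace.re = ∑ x, ∑ x', (block x x' * block x' x).trace.re := by
        simp only [trace_mul_eq_sum_trace_submatrix_mul, Complex.re_sum, block]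
    _ ≤ ∑ x, ∑ x', s x * s x' := by
        gcongr with x _ x' _
        exact hσ.re_trace_submatrix_mul_submatrix_le _ _
    _ = (∑ x, s x) ^ 2 := by rw [sq, Finset.sum_mul_sum]
    _ ≤ Fintype.card α * ∑ x, s x ^ 2 := sq_sum_le_card_mul_sum_sq
    _ = Fintype.card α * ∑ x, (block x x * block x x).trace.re := by
        congr 1
        exact Finset.sum_congr rfl fun x _ =>
          Real.sq_sqrt ((hblock x).re_trace_mul_nonneg (hblock x))
    _ ≤ Fintype.card α * (partialTraceB σ * partialTraceB σ).trace.re := by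
        rw [partialTraceB_eq_sum_submatrix]
        gcongr
        exact PosSemidef.sum_re_trace_mul_self_le hblock

/-- **Purity lower bound for the reduced square root:** for a positive definite density
matrix `ρ` on a bipartite system whose `B`-factor consists of `k` qubits
(dimension `2^k`), one has `Tr((Tr_B(ρ^{1/2}))²) ≥ 2^{-3k}`. -/
theorem trace_sq_partialTrace_sqrt_ge
    {α γ : Type} [Fintype α] [Fintype γ] [DecidableEq α] [DecidableEq γ]
    (k : ℕ) (hcard : Fintype.card α = 2 ^ k)
    (ρ : Matrix (α × γ) (α × γ) ℂ) (hρ : ρ.PosDef) (htr : ρ.trace = 1) :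
    ((2 : ℝ) ^ (3 * k))⁻¹ ≤
      ((partialTraceB hρ.posSemidef.sqrt * partialTraceB hρ.posSemidef.sqrt).trace).re := by
  have hpurity := hρ.posSemidef.posSemidef_sqrt.re_trace_mul_self_le_card_mul_partialTraceB
  rw [hρ.posSemidef.sqrt_mul_self, htr, hcard, Complex.one_re, Nat.cast_pow, Nat.cast_ofNat]
    at hpurity
  calc ((2 : ℝ) ^ (3 * k))⁻¹ ≤ ((2 : ℝ) ^ k)⁻¹ :=
        inv_anti₀ (by positivity) (pow_le_pow_right₀ one_le_two (by omega))
    _ ≤ _ := (inv_le_iff_one_le_mul₀' (by positivity)).mpr hpurity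
end
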